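/- arXiv:1909.07056 — 2 statements merged into one kernel-verified Lean document; each statement's English description precedes it below -/
import Mathlib

section
/- For every s ∈ ℝ^d, the function w is differentiable at s and ∇w(s) = −(Dη̂(s))ᵀ (DΦ(η̂(s)))ᵀ h(s), where Dη̂(s) is the Jacobian matrix of η̂ at s and DΦ(η̂(s)) is the Jacobian matrix of Φ at η̂(s). -/
/-!
At the maximiser `η = η̂(s)` the first-order condition reads `DΦ(η)ᵀ s = ∇Ψ(η)`. Differentiating
under the integral, `∇ ∫ L(·; ξ) dξ` at `η` is `∫ L(η; ξ) (DΦ(η)ᵀ S(ξ) − ∇Ψ(η)) dξ`, which by the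
first-order condition equals `DΦ(η)ᵀ ∫ L(η; ξ) (S(ξ) − s) dξ`. Dividing by `∫ L(η; ξ) dξ` gives
`∇ℓ(η) = DΦ(η)ᵀ h(s)`, and the chain rule through `η̂` finishes the proof.
-/

open MeasureTheory ContinuousLinearMap
open scoped RealInnerProductSpace

section Gradient

variable {E F : Type*} [NormedAddCommGroup E] [InnerProductSpace ℝ E] [CompleteSpace E]
  [NormedAddCommGroup F] [InnerProductSpace ℝ F] [CompleteSpace F]

theorem HasGradientAt.neg {f : E → ℝ} {g x : E} (hf : HasGradientAt f g x) :
    HasGradientAt (fun y => -f y) (-g) x := by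
  rw [hasGradientAt_iff_hasFDerivAt, map_neg]
  exact hf.hasFDerivAt.neg

theorem HasGradientAt.log {f : E → ℝ} {g x : E} (hf : HasGradientAt f g x) (hx : f x ≠ 0) :
    HasGradientAt (fun y => Real.log (f y)) ((f x)⁻¹ • g) x := by
  rw [hasGradientAt_iff_hasFDerivAt, map_smul]
  exact hf.hasFDerivAt.log hx

theorem HasGradientAt.comp_hasFDerivAt {f : F → ℝ} {g : F} {φ : E → F} {φ' : E →L[ℝ] F} {x : E}
    (hf : HasGradientAt f g (φ x)) (hφ : HasFDerivAt φ φ' x) :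
    HasGradientAt (f ∘ φ) (adjoint φ' g) x := by
  rw [hasGradientAt_iff_hasFDerivAt]
  refine (hf.hasFDerivAt.comp x hφ).congr_fderiv ?_
  ext v
  simp [adjoint_inner_left]

theorem adjoint_fderiv_apply_eq_gradient_of_isLocalMax {Ψ : E → ℝ} {Φ : E → F} {s : F} {η : E}
    (hΨ : DifferentiableAt ℝ Ψ η) (hΦ : DifferentiableAt ℝ Φ η)
    (hmax : IsLocalMax (fun η' => -Ψ η' + ⟪s, Φ η'⟫) η) :
    adjoint (fderiv ℝ Φ η) s = gradient Ψ η := by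
  have h0 := hmax.hasFDerivAt_eq_zero
    (hΨ.hasGradientAt.hasFDerivAt.neg.add ((innerSL ℝ s).hasFDerivAt.comp η hΦ.hasFDerivAt))
  refine ext_inner_right ℝ fun v => ?_
  have h0v := congr($h0 v)
  simp only [add_apply, neg_apply, comp_apply, InnerProductSpace.toDual_apply_apply,
    innerSL_apply_apply, zero_apply] at h0v
  rw [adjoint_inner_left]
  linarith

end Gradient

theorem Integrable.smul_of_integrable_norm_mul {α E : Type*} [MeasurableSpace α] {μ : Measure α}
    [NormedAddCommGroup E] [NormedSpace ℝ E] {f : α → ℝ} {g : α → E}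
    (hf : AEStronglyMeasurable f μ) (hg : AEStronglyMeasurable g μ)
    (hfg : Integrable (fun x => ‖g x‖ * f x) μ) :
    Integrable (fun x => f x • g x) μ :=
  hfg.congr' (hf.smul hg) (Filter.Eventually.of_forall fun x => by simp [norm_smul, mul_comm])

theorem statement1_general
    (c d l : ℕ)
    (Θ : Set (EuclideanSpace ℝ (Fin c))) (hΘ : IsOpen Θ)
    (Ψ : EuclideanSpace ℝ (Fin c) → ℝ)
    (Φ : EuclideanSpace ℝ (Fin c) → EuclideanSpace ℝ (Fin d))
    (hΨ : ContDiffOn ℝ 1 Ψ Θ) (hΦ : ContDiffOn ℝ 1 Φ Θ)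
    (S : EuclideanSpace ℝ (Fin l) → EuclideanSpace ℝ (Fin d))
    (hS : Measurable S)
    (L : EuclideanSpace ℝ (Fin c) → EuclideanSpace ℝ (Fin l) → ℝ)
    (hLpos : ∀ η ∈ Θ, 0 < ∫ ξ, L η ξ)
    (hSint : ∀ η ∈ Θ, Integrable (fun ξ => ‖S ξ‖ * L η ξ))
    (ℓ : EuclideanSpace ℝ (Fin c) → ℝ)
    (hℓ : ∀ η, ℓ η = Real.log (∫ ξ, L η ξ))
    (π : EuclideanSpace ℝ (Fin c) → EuclideanSpace ℝ (Fin l) → ℝ)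
    (hπ : ∀ η ξ, π η ξ = L η ξ / ∫ ξ', L η ξ')
    -- differentiation under the integral sign in η is valid for ∫ L(η; ξ) dξ
    (hDUI : ∀ η ∈ Θ, HasGradientAt (fun η' => ∫ ξ, L η' ξ)
      (∫ ξ, L η ξ • (-gradient Ψ η + ContinuousLinearMap.adjoint (fderiv ℝ Φ η) (S ξ))) η)
    (ηhat : EuclideanSpace ℝ (Fin d) → EuclideanSpace ℝ (Fin c))
    (hηhatΘ : ∀ s, ηhat s ∈ Θ)
    (hηhatC1 : ContDiff ℝ 1 ηhat)
    (hmax : ∀ s : EuclideanSpace ℝ (Fin d), ∀ η ∈ Θ,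
      -Ψ η + ⟪s, Φ η⟫ ≤ -Ψ (ηhat s) + ⟪s, Φ (ηhat s)⟫)
    (w : EuclideanSpace ℝ (Fin d) → ℝ)
    (hw : ∀ s, w s = -ℓ (ηhat s))
    (h : EuclideanSpace ℝ (Fin d) → EuclideanSpace ℝ (Fin d))
    (hh : ∀ s, h s = ∫ ξ, π (ηhat s) ξ • (S ξ - s))
 :
    ∀ s, HasGradientAt w
      (-(ContinuousLinearMap.adjoint (fderiv ℝ ηhat s)
          (ContinuousLinearMap.adjoint (fderiv ℝ Φ (ηhat s)) (h s)))) s := by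
  intro s
  set η := ηhat s
  set A := fderiv ℝ Φ η
  have hηΘ : η ∈ Θ := hηhatΘ s
  have hΘη : Θ ∈ nhds η := hΘ.mem_nhds hηΘ
  have hFOC : adjoint A s = gradient Ψ η :=
    adjoint_fderiv_apply_eq_gradient_of_isLocalMax
      ((hΨ.differentiableOn one_ne_zero).differentiableAt hΘη)
      ((hΦ.differentiableOn one_ne_zero).differentiableAt hΘη)
      (Filter.eventually_of_mem hΘη fun η' hη' => hmax s η' hη')
  have hLη : Integrable (L η) := Integrable.of_integral_ne_zero (hLpos η hηΘ).ne'
  have hint : Integrable (fun ξ => L η ξ • (S ξ - s)) := by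
    simp only [smul_sub]
    exact (Integrable.smul_of_integrable_norm_mul hLη.aestronglyMeasurable
      hS.aestronglyMeasurable (hSint η hηΘ)).sub (hLη.smul_const s)
  have hmean : ∫ ξ, L η ξ • (-gradient Ψ η + adjoint A (S ξ))
      = adjoint A (∫ ξ, L η ξ • (S ξ - s)) := by
    rw [← integral_comp_comm _ hint, ← hFOC]
    simp only [map_smul, map_sub, neg_add_eq_sub]
  have hhs : h s = (∫ ξ, L η ξ)⁻¹ • ∫ ξ, L η ξ • (S ξ - s) := by
    simp only [hh, hπ, div_eq_inv_mul, ← smul_smul, integral_smul, η]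
  have hℓη : HasGradientAt ℓ (adjoint A (h s)) η := by
    rw [hhs, map_smul, funext hℓ]
    exact (hmean ▸ hDUI η hηΘ).log (hLpos η hηΘ).ne'
  rw [funext hw]
  exact (hℓη.comp_hasFDerivAt (hηhatC1.differentiable one_ne_zero s).hasFDerivAt).neg

theorem statement1
    (c d l : ℕ)
    (Θ : Set (EuclideanSpace ℝ (Fin c))) (hΘ : IsOpen Θ)
    (Ψ : EuclideanSpace ℝ (Fin c) → ℝ)
    (Φ : EuclideanSpace ℝ (Fin c) → EuclideanSpace ℝ (Fin d))
    (hΨ : ContDiffOn ℝ 1 Ψ Θ) (hΦ : ContDiffOn ℝ 1 Φ Θ)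
    (S : EuclideanSpace ℝ (Fin l) → EuclideanSpace ℝ (Fin d))
    (hS : Measurable S)
    (L : EuclideanSpace ℝ (Fin c) → EuclideanSpace ℝ (Fin l) → ℝ)
    (hL : ∀ η ξ, L η ξ = Real.exp (-Ψ η + ⟪S ξ, Φ η⟫))
    (hLint : ∀ η ∈ Θ, Integrable (L η))
    (hLpos : ∀ η ∈ Θ, 0 < ∫ ξ, L η ξ)
    (hSint : ∀ η ∈ Θ, Integrable (fun ξ => ‖S ξ‖ * L η ξ))
    (ℓ : EuclideanSpace ℝ (Fin c) → ℝ)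
    (hℓ : ∀ η, ℓ η = Real.log (∫ ξ, L η ξ))
    (π : EuclideanSpace ℝ (Fin c) → EuclideanSpace ℝ (Fin l) → ℝ)
    (hπ : ∀ η ξ, π η ξ = L η ξ / ∫ ξ', L η ξ')
    -- differentiation under the integral sign in η is valid for ∫ L(η; ξ) dξ
    (hDUI : ∀ η ∈ Θ, HasGradientAt (fun η' => ∫ ξ, L η' ξ)
      (∫ ξ, L η ξ • (-gradient Ψ η + ContinuousLinearMap.adjoint (fderiv ℝ Φ η) (S ξ))) η)
    (ηhat : EuclideanSpace ℝ (Fin d) → EuclideanSpace ℝ (Fin c))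
    (hηhatΘ : ∀ s, ηhat s ∈ Θ)
    (hηhatC1 : ContDiff ℝ 1 ηhat)
    (hmax : ∀ s : EuclideanSpace ℝ (Fin d), ∀ η ∈ Θ,
      -Ψ η + ⟪s, Φ η⟫ ≤ -Ψ (ηhat s) + ⟪s, Φ (ηhat s)⟫)
    (w : EuclideanSpace ℝ (Fin d) → ℝ)
    (hw : ∀ s, w s = -ℓ (ηhat s))
    (h : EuclideanSpace ℝ (Fin d) → EuclideanSpace ℝ (Fin d))
    (hh : ∀ s, h s = ∫ ξ, π (ηhat s) ξ • (S ξ - s))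
 :
    ∀ s, HasGradientAt w
      (-(ContinuousLinearMap.adjoint (fderiv ℝ ηhat s)
          (ContinuousLinearMap.adjoint (fderiv ℝ Φ (ηhat s)) (h s)))) s :=
  statement1_general c d l Θ hΘ Ψ Φ hΨ hΦ S hS L hLpos hSint ℓ hℓ π hπ hDUI ηhat hηhatΘ hηhatC1 hmax
    w hw h hh
end

section
/- Assume in addition that Ψ and Φ are twice continuously differentiable, and for s ∈ ℝ^d let H(s) denote the Hessian matrix at η̂(s) of the map η ↦ Ψ(η) − ⟨s, Φ(η)⟩, which is positive semidefinite since η̂(s) is an interior maximizer of its negative. Then for every s ∈ ℝ^d one has ⟨∇w(s), h(s)⟩ = −⟨H(s) Dη̂(s) h(s), Dη̂(s) h(s)⟩ ≤ 0; consequently, setting 𝒮 = { s ∈ ℝ^d : ⟨∇w(s), h(s)⟩ = 0 }, for every s ∉ 𝒮 one has ⟨∇w(s), h(s)⟩ < 0, i.e., w is a Lyapunov function for the mean field h. -/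
open MeasureTheory
open scoped RealInnerProductSpace

/-!
Since `η̂(s)` minimizes `F_s(η) = Ψ(η) − ⟨s, Φ(η)⟩`, stationarity gives `∇Ψ(η̂ s) = DΦ(η̂ s)* s`
for every `s`. Differentiating this identity in `s` yields `H(s) Dη̂(s) = DΦ(η̂ s)*`. On the other
hand, differentiating under the integral and using stationarity, the gradient of the normalising
constant at `η̂(s)` is `Z · DΦ(η̂ s)* h(s)`, so `⟨∇w(s), h(s)⟩ = −⟨DΦ(η̂ s)* h(s), Dη̂(s) h(s)⟩`.
Combining the two gives the identity, and `H(s)` is positive semidefinite by the second-order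
necessary condition at the interior minimizer `η̂(s)`.
-/

open Filter Topology Set InnerProductSpace
open ContinuousLinearMap (adjoint)
open scoped Gradient

theorem IsLocalMin.nonneg_of_hasDerivAt_of_hasDerivAt {g g' : ℝ → ℝ} {x c : ℝ}
    (hmin : IsLocalMin g x) (hg : ∀ᶠ t in 𝓝 x, HasDerivAt g (g' t) t) (hg' : HasDerivAt g' c x) :
    0 ≤ c := by
  by_contra! hc
  have hcrit : g' x = 0 := hmin.hasDerivAt_eq_zero hg.self_of_nhds
  have hdecr : ∀ᶠ t in 𝓝[>] x, g' t < 0 := by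
    filter_upwards [nhdsGT_le_nhdsNE x ((hasDerivAt_iff_tendsto_slope.mp hg').eventually_lt_const hc),
      self_mem_nhdsWithin] with t hslope (ht : x < t)
    rw [slope_def_field, hcrit, sub_zero] at hslope
    exact ((div_neg_iff.mp hslope).resolve_left fun h => (sub_pos.mpr ht).not_gt h.2).1
  obtain ⟨u, hxu, hu⟩ := mem_nhdsGT_iff_exists_Ioo_subset.mp
    (hdecr.and (nhdsWithin_le_nhds (hg.and hmin)))
  obtain ⟨b, hxb, hbu⟩ := exists_between (mem_Ioi.mp hxu)
  have hcont : ContinuousOn g (Icc x b) := by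
    rintro t ⟨hxt, htb⟩
    rcases hxt.eq_or_lt with rfl | hxt
    · exact hg.self_of_nhds.continuousAt.continuousWithinAt
    · exact (hu ⟨hxt, htb.trans_lt hbu⟩).2.1.continuousAt.continuousWithinAt
  obtain ⟨θ, hθ, hslope⟩ := exists_hasDerivAt_eq_slope g g' hxb hcont
    fun t ht => (hu ⟨ht.1, ht.2.trans hbu⟩).2.1
  have hθneg : g' θ < 0 := (hu ⟨hθ.1, hθ.2.trans hbu⟩).1
  rw [hslope, div_lt_iff₀ (sub_pos.mpr hxb), zero_mul] at hθneg
  linarith [(hu ⟨hxb, hbu⟩).2.2]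

theorem ContinuousAt.hasFDerivAt_apply_sub {V F : Type*} [NormedAddCommGroup V] [NormedSpace ℝ V]
    [NormedAddCommGroup F] [NormedSpace ℝ F] {A : V → V →L[ℝ] F} {s : V} (hA : ContinuousAt A s) :
    HasFDerivAt (fun s' => A s' (s' - s)) (A s) s := by
  rw [hasFDerivAt_iff_isLittleO, Asymptotics.isLittleO_iff]
  intro ε hε
  filter_upwards [Metric.continuousAt_iff'.mp hA ε hε] with s' hs'
  rw [sub_self, map_zero, sub_zero, ← sub_apply]
  rw [dist_eq_norm] at hs'
  exact (ContinuousLinearMap.le_opNorm _ _).trans (by gcongr)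

theorem HasFDerivAt.comp_eq_of_eventuallyEq_apply_sub {V E F : Type*} [NormedAddCommGroup V]
    [NormedSpace ℝ V] [NormedAddCommGroup E] [NormedSpace ℝ E] [NormedAddCommGroup F]
    [NormedSpace ℝ F] {g : E → F} {T : E →L[ℝ] F} {η : V → E} {Dη : V →L[ℝ] E}
    {A : V → V →L[ℝ] F} {s : V} (hg : HasFDerivAt g T (η s)) (hη : HasFDerivAt η Dη s)
    (hA : ContinuousAt A s) (heq : ∀ᶠ s' in 𝓝 s, g (η s') = A s' (s' - s)) : T ∘L Dη = A s :=
  (hg.comp s hη).unique (hA.hasFDerivAt_apply_sub.congr_of_eventuallyEq heq)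

theorem MeasureTheory.Integrable.smul_sub_of_integrable_norm_mul {X V : Type*} [MeasurableSpace X]
    {μ : Measure X} [NormedAddCommGroup V] [NormedSpace ℝ V] {p : X → ℝ} {S : X → V}
    (hp : Integrable p μ) (hp0 : ∀ x, 0 ≤ p x) (hS : AEStronglyMeasurable S μ)
    (hSp : Integrable (fun x => ‖S x‖ * p x) μ) (s : V) :
    Integrable (fun x => p x • (S x - s)) μ := by
  simp_rw [smul_sub]
  refine .sub (hSp.mono' (hp.aestronglyMeasurable.smul hS) (.of_forall fun x => ?_))
    (hp.smul_const s)
  rw [norm_smul, Real.norm_of_nonneg (hp0 x), mul_comm]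

theorem integral_smul_neg_add_apply_eq_smul {X V E : Type*} [MeasurableSpace X] {μ : Measure X}
    [NormedAddCommGroup V] [NormedSpace ℝ V] [CompleteSpace V] [NormedAddCommGroup E]
    [NormedSpace ℝ E] [CompleteSpace E] {p : X → ℝ} {S : X → V} (B : V →L[ℝ] E) (s : V)
    (hint : Integrable (fun x => p x • (S x - s)) μ) (hp : ∫ x, p x ∂μ ≠ 0) :
    ∫ x, p x • (-B s + B (S x)) ∂μ =
      (∫ x, p x ∂μ) • B (∫ x, (p x / ∫ y, p y ∂μ) • (S x - s) ∂μ) := by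
  simp_rw [div_eq_mul_inv, mul_comm _ (∫ y, p y ∂μ)⁻¹, mul_smul, integral_smul, map_smul,
    smul_inv_smul₀ hp, ← B.integral_comp_comm hint, map_smul, map_sub, neg_add_eq_sub]

section

variable {E V : Type*} [NormedAddCommGroup E] [InnerProductSpace ℝ E] [CompleteSpace E]
  [NormedAddCommGroup V] [InnerProductSpace ℝ V] [CompleteSpace V]

theorem ContDiffAt.differentiableAt_gradient {f : E → ℝ} {x : E} (hf : ContDiffAt ℝ 2 f x) :
    DifferentiableAt ℝ (∇ f) x :=
  ((toDual ℝ E).symm.toContinuousLinearEquiv.toContinuousLinearMap : StrongDual ℝ E →L[ℝ] E)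
    |>.differentiableAt.comp x <| (hf.fderiv_right (m := 1) le_rfl).differentiableAt one_ne_zero

theorem IsLocalMin.inner_fderiv_gradient_apply_self_nonneg {f : E → ℝ} {x : E}
    (hmin : IsLocalMin f x) (hf : ContDiffAt ℝ 2 f x) (u : E) :
    0 ≤ ⟪fderiv ℝ (∇ f) x u, u⟫ := by
  set γ : ℝ → E := fun t => x + t • u
  have hγ : ∀ t, HasDerivAt γ u t := fun t =>
    (((hasDerivAt_id t).smul_const u).const_add x).congr_deriv (one_smul ℝ u)
  have hγ0 : γ 0 = x := by simp [γ]
  have hγx : Tendsto γ (𝓝 0) (𝓝 x) := hγ0 ▸ (hγ 0).continuousAt.tendsto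
  have hT : HasFDerivAt (∇ f) (fderiv ℝ (∇ f) x) (γ 0) :=
    hγ0 ▸ hf.differentiableAt_gradient.hasFDerivAt
  -- second derivative along the line `t ↦ x + t • u`
  refine IsLocalMin.nonneg_of_hasDerivAt_of_hasDerivAt (g := f ∘ γ)
    (g' := fun t => ⟪∇ f (γ t), u⟫) (hγ0 ▸ hmin |>.comp_continuous (hγ 0).continuousAt) ?_ ?_
  · filter_upwards [hγx.eventually (hf.eventually (by simp))] with t ht
    exact (ht.differentiableAt two_ne_zero).hasGradientAt.hasFDerivAt.comp_hasDerivAt t (hγ t)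
  · simpa using (hT.comp_hasDerivAt 0 (hγ 0)).inner ℝ (hasDerivAt_const 0 u)

theorem HasFDerivAt.hasGradientAt_inner_left {Φ : E → V} {Φ' : E →L[ℝ] V} {x : E}
    (hΦ : HasFDerivAt Φ Φ' x) (s : V) : HasGradientAt (fun y => ⟪s, Φ y⟫) (adjoint Φ' s) x := by
  rw [hasGradientAt_iff_hasFDerivAt]
  refine ((innerSL ℝ s).hasFDerivAt.comp x hΦ).congr_fderiv ?_
  ext v
  simp [ContinuousLinearMap.adjoint_inner_left]

theorem inner_gradient_neg_log_comp {Z : E → ℝ} {η : V → E} {Dη : V →L[ℝ] E} {B : V →L[ℝ] E}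
    {s v : V} (hZ : HasGradientAt Z (Z (η s) • B v) (η s)) (hZ0 : Z (η s) ≠ 0)
    (hη : HasFDerivAt η Dη s) :
    ⟪∇ (fun s' => -Real.log (Z (η s'))) s, v⟫ = -⟪B v, Dη v⟫ := by
  have hw : HasFDerivAt (fun s' => -Real.log (Z (η s')))
      (-((Z (η s))⁻¹ • (toDual ℝ E (Z (η s) • B v)).comp Dη)) s :=
    ((hZ.hasFDerivAt.log hZ0).comp s hη).neg
  rw [inner_gradient_left, hw.fderiv]
  simp [hZ0]

variable {Ψ : E → ℝ} {Φ : E → V}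

theorem hasGradientAt_sub_inner {Φ' : E →L[ℝ] V} {x : E} (hΨ : DifferentiableAt ℝ Ψ x)
    (hΦ : HasFDerivAt Φ Φ' x) (s : V) :
    HasGradientAt (fun y => Ψ y - ⟪s, Φ y⟫) (∇ Ψ x - adjoint Φ' s) x := by
  rw [hasGradientAt_iff_hasFDerivAt, map_sub]
  exact hΨ.hasGradientAt.hasFDerivAt.sub (hΦ.hasGradientAt_inner_left s).hasFDerivAt

theorem IsLocalMin.gradient_eq_adjoint_apply {x : E} {s : V}
    (hmin : IsLocalMin (fun y => Ψ y - ⟪s, Φ y⟫) x) (hΨ : DifferentiableAt ℝ Ψ x)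
    (hΦ : DifferentiableAt ℝ Φ x) : ∇ Ψ x = adjoint (fderiv ℝ Φ x) s := by
  have hgrad := hasGradientAt_sub_inner hΨ hΦ.hasFDerivAt s
  rw [← sub_eq_zero, ← hgrad.gradient, gradient, hmin.fderiv_eq_zero, map_zero]

theorem fderiv_gradient_comp_fderiv_eq_adjoint {Θ : Set E} (hΘ : IsOpen Θ)
    (hΨ : ContDiffOn ℝ 2 Ψ Θ) (hΦ : ContDiffOn ℝ 2 Φ Θ) {η : V → E} (hηΘ : ∀ s, η s ∈ Θ)
    (hη : Differentiable ℝ η) (hstat : ∀ s, ∇ Ψ (η s) = adjoint (fderiv ℝ Φ (η s)) s) (s : V) :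
    fderiv ℝ (∇ fun y => Ψ y - ⟪s, Φ y⟫) (η s) ∘L fderiv ℝ η s = adjoint (fderiv ℝ Φ (η s)) := by
  have hΘη : ∀ s', Θ ∈ 𝓝 (η s') := fun s' => hΘ.mem_nhds (hηΘ s')
  -- `∇F_s (η s') = DΦ(η s')* (s' - s)` by stationarity at `s'`; differentiate at `s' = s`
  refine HasFDerivAt.comp_eq_of_eventuallyEq_apply_sub (g := ∇ fun y => Ψ y - ⟪s, Φ y⟫)
    (A := fun s' => adjoint (fderiv ℝ Φ (η s'))) ?_ (hη s).hasFDerivAt ?_ (.of_forall fun s' => ?_)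
  · exact ((hΨ.sub (contDiffOn_const.inner ℝ hΦ)).contDiffAt
      (hΘη s)).differentiableAt_gradient.hasFDerivAt
  · exact adjoint.continuous.continuousAt.comp <|
      ((hΦ.continuousOn_fderiv_of_isOpen hΘ one_le_two).continuousAt (hΘη s)).comp
        (hη s).continuousAt
  · have hgrad := hasGradientAt_sub_inner ((hΨ.contDiffAt (hΘη s')).differentiableAt two_ne_zero)
      ((hΦ.contDiffAt (hΘη s')).differentiableAt two_ne_zero).hasFDerivAt s
    rw [hgrad.gradient, hstat s', map_sub]

end

theorem statement2_general
    (c d l : ℕ)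
    (Θ : Set (EuclideanSpace ℝ (Fin c))) (hΘ : IsOpen Θ)
    (Ψ : EuclideanSpace ℝ (Fin c) → ℝ)
    (Φ : EuclideanSpace ℝ (Fin c) → EuclideanSpace ℝ (Fin d))
    (S : EuclideanSpace ℝ (Fin l) → EuclideanSpace ℝ (Fin d))
    (hS : Measurable S)
    (L : EuclideanSpace ℝ (Fin c) → EuclideanSpace ℝ (Fin l) → ℝ)
    (hL : ∀ η ξ, L η ξ = Real.exp (-Ψ η + ⟪S ξ, Φ η⟫))
    (hLint : ∀ η ∈ Θ, Integrable (L η))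
    (hLpos : ∀ η ∈ Θ, 0 < ∫ ξ, L η ξ)
    (hSint : ∀ η ∈ Θ, Integrable (fun ξ => ‖S ξ‖ * L η ξ))
    (ℓ : EuclideanSpace ℝ (Fin c) → ℝ)
    (hℓ : ∀ η, ℓ η = Real.log (∫ ξ, L η ξ))
    (π : EuclideanSpace ℝ (Fin c) → EuclideanSpace ℝ (Fin l) → ℝ)
    (hπ : ∀ η ξ, π η ξ = L η ξ / ∫ ξ', L η ξ')
    -- differentiation under the integral sign in η is valid for ∫ L(η; ξ) dξ
    (hDUI : ∀ η ∈ Θ, HasGradientAt (fun η' => ∫ ξ, L η' ξ)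
      (∫ ξ, L η ξ • (-gradient Ψ η + ContinuousLinearMap.adjoint (fderiv ℝ Φ η) (S ξ))) η)
    (ηhat : EuclideanSpace ℝ (Fin d) → EuclideanSpace ℝ (Fin c))
    (hηhatΘ : ∀ s, ηhat s ∈ Θ)
    (hηhatC1 : ContDiff ℝ 1 ηhat)
    (hmax : ∀ s : EuclideanSpace ℝ (Fin d), ∀ η ∈ Θ,
      -Ψ η + ⟪s, Φ η⟫ ≤ -Ψ (ηhat s) + ⟪s, Φ (ηhat s)⟫)
    (w : EuclideanSpace ℝ (Fin d) → ℝ)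
    (hw : ∀ s, w s = -ℓ (ηhat s))
    (h : EuclideanSpace ℝ (Fin d) → EuclideanSpace ℝ (Fin d))
    (hh : ∀ s, h s = ∫ ξ, π (ηhat s) ξ • (S ξ - s))
    -- Ψ and Φ are twice continuously differentiable
    (hΨ2 : ContDiffOn ℝ 2 Ψ Θ) (hΦ2 : ContDiffOn ℝ 2 Φ Θ)
    -- H(s) is the Hessian at η̂(s) of η ↦ Ψ(η) − ⟨s, Φ(η)⟩
    (H : EuclideanSpace ℝ (Fin d) → EuclideanSpace ℝ (Fin c) →L[ℝ] EuclideanSpace ℝ (Fin c))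
    (hH : ∀ s, H s =
      fderiv ℝ (fun η => gradient (fun η' => Ψ η' - ⟪s, Φ η'⟫) η) (ηhat s))
 :
    (∀ s, ⟪gradient w s, h s⟫ =
        -⟪(H s) (fderiv ℝ ηhat s (h s)), fderiv ℝ ηhat s (h s)⟫
      ∧ ⟪gradient w s, h s⟫ ≤ 0)
    ∧ (∀ s ∉ {s' : EuclideanSpace ℝ (Fin d) | ⟪gradient w s', h s'⟫ = 0},
        ⟪gradient w s, h s⟫ < 0) := by
  have hΘη : ∀ s, Θ ∈ 𝓝 (ηhat s) := fun s => hΘ.mem_nhds (hηhatΘ s)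
  have hηhat : Differentiable ℝ ηhat := hηhatC1.differentiable one_ne_zero
  have hmin : ∀ s, IsLocalMin (fun η => Ψ η - ⟪s, Φ η⟫) (ηhat s) := fun s =>
    eventually_of_mem (hΘη s) fun η hη => by dsimp only; linarith [hmax s η hη]
  have hstat : ∀ s, ∇ Ψ (ηhat s) = adjoint (fderiv ℝ Φ (ηhat s)) s := fun s =>
    (hmin s).gradient_eq_adjoint_apply ((hΨ2.contDiffAt (hΘη s)).differentiableAt two_ne_zero)
      ((hΦ2.contDiffAt (hΘη s)).differentiableAt two_ne_zero)
  have hZ : ∀ s, HasGradientAt (fun η => ∫ ξ, L η ξ)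
      ((∫ ξ, L (ηhat s) ξ) • adjoint (fderiv ℝ Φ (ηhat s)) (h s)) (ηhat s) := fun s => by
    have hint := (hLint _ (hηhatΘ s)).smul_sub_of_integrable_norm_mul
      (fun ξ => by rw [hL]; positivity) hS.aestronglyMeasurable (hSint _ (hηhatΘ s)) s
    simpa only [hstat, integral_smul_neg_add_apply_eq_smul _ _ hint (hLpos _ (hηhatΘ s)).ne',
      ← hπ, ← hh] using hDUI _ (hηhatΘ s)
  have hw' : w = fun s => -Real.log (∫ ξ, L (ηhat s) ξ) := funext fun s => by rw [hw, hℓ]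
  have hdescent : ∀ s, ⟪∇ w s, h s⟫ =
      -⟪H s (fderiv ℝ ηhat s (h s)), fderiv ℝ ηhat s (h s)⟫ := fun s => by
    have hHη := DFunLike.congr_fun
      (fderiv_gradient_comp_fderiv_eq_adjoint hΘ hΨ2 hΦ2 hηhatΘ hηhat hstat s) (h s)
    rw [hw', inner_gradient_neg_log_comp (hZ s) (hLpos _ (hηhatΘ s)).ne' (hηhat s).hasFDerivAt,
      hH s, ← ContinuousLinearMap.comp_apply, hHη, real_inner_comm]
  have hpsd : ∀ s, 0 ≤ ⟪H s (fderiv ℝ ηhat s (h s)), fderiv ℝ ηhat s (h s)⟫ := fun s =>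
    hH s ▸ (hmin s).inner_fderiv_gradient_apply_self_nonneg
      ((hΨ2.sub (contDiffOn_const.inner ℝ hΦ2)).contDiffAt (hΘη s)) _
  have hnonpos : ∀ s, ⟪∇ w s, h s⟫ ≤ 0 := fun s => by linarith [hdescent s, hpsd s]
  exact ⟨fun s => ⟨hdescent s, hnonpos s⟩, fun s hs => (hnonpos s).lt_of_ne hs⟩

theorem statement2
    (c d l : ℕ)
    (Θ : Set (EuclideanSpace ℝ (Fin c))) (hΘ : IsOpen Θ)
    (Ψ : EuclideanSpace ℝ (Fin c) → ℝ)
    (Φ : EuclideanSpace ℝ (Fin c) → EuclideanSpace ℝ (Fin d))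
    (hΨ : ContDiffOn ℝ 1 Ψ Θ) (hΦ : ContDiffOn ℝ 1 Φ Θ)
    (S : EuclideanSpace ℝ (Fin l) → EuclideanSpace ℝ (Fin d))
    (hS : Measurable S)
    (L : EuclideanSpace ℝ (Fin c) → EuclideanSpace ℝ (Fin l) → ℝ)
    (hL : ∀ η ξ, L η ξ = Real.exp (-Ψ η + ⟪S ξ, Φ η⟫))
    (hLint : ∀ η ∈ Θ, Integrable (L η))
    (hLpos : ∀ η ∈ Θ, 0 < ∫ ξ, L η ξ)
    (hSint : ∀ η ∈ Θ, Integrable (fun ξ => ‖S ξ‖ * L η ξ))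
    (ℓ : EuclideanSpace ℝ (Fin c) → ℝ)
    (hℓ : ∀ η, ℓ η = Real.log (∫ ξ, L η ξ))
    (π : EuclideanSpace ℝ (Fin c) → EuclideanSpace ℝ (Fin l) → ℝ)
    (hπ : ∀ η ξ, π η ξ = L η ξ / ∫ ξ', L η ξ')
    -- differentiation under the integral sign in η is valid for ∫ L(η; ξ) dξ
    (hDUI : ∀ η ∈ Θ, HasGradientAt (fun η' => ∫ ξ, L η' ξ)
      (∫ ξ, L η ξ • (-gradient Ψ η + ContinuousLinearMap.adjoint (fderiv ℝ Φ η) (S ξ))) η)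
    (ηhat : EuclideanSpace ℝ (Fin d) → EuclideanSpace ℝ (Fin c))
    (hηhatΘ : ∀ s, ηhat s ∈ Θ)
    (hηhatC1 : ContDiff ℝ 1 ηhat)
    (hmax : ∀ s : EuclideanSpace ℝ (Fin d), ∀ η ∈ Θ,
      -Ψ η + ⟪s, Φ η⟫ ≤ -Ψ (ηhat s) + ⟪s, Φ (ηhat s)⟫)
    (w : EuclideanSpace ℝ (Fin d) → ℝ)
    (hw : ∀ s, w s = -ℓ (ηhat s))
    (h : EuclideanSpace ℝ (Fin d) → EuclideanSpace ℝ (Fin d))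
    (hh : ∀ s, h s = ∫ ξ, π (ηhat s) ξ • (S ξ - s))
    -- Ψ and Φ are twice continuously differentiable
    (hΨ2 : ContDiffOn ℝ 2 Ψ Θ) (hΦ2 : ContDiffOn ℝ 2 Φ Θ)
    -- H(s) is the Hessian at η̂(s) of η ↦ Ψ(η) − ⟨s, Φ(η)⟩
    (H : EuclideanSpace ℝ (Fin d) → EuclideanSpace ℝ (Fin c) →L[ℝ] EuclideanSpace ℝ (Fin c))
    (hH : ∀ s, H s =
      fderiv ℝ (fun η => gradient (fun η' => Ψ η' - ⟪s, Φ η'⟫) η) (ηhat s))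
 :
    (∀ s, ⟪gradient w s, h s⟫ =
        -⟪(H s) (fderiv ℝ ηhat s (h s)), fderiv ℝ ηhat s (h s)⟫
      ∧ ⟪gradient w s, h s⟫ ≤ 0)
    ∧ (∀ s ∉ {s' : EuclideanSpace ℝ (Fin d) | ⟪gradient w s', h s'⟫ = 0},
        ⟪gradient w s, h s⟫ < 0) :=
  statement2_general c d l Θ hΘ Ψ Φ S hS L hL hLint hLpos hSint ℓ hℓ π hπ hDUI ηhat hηhatΘ hηhatC1
    hmax w hw h hh hΨ2 hΦ2 H hH
end
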